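/- Let R be a root system in V, V′ a subspace of V, and R′ = R ∩ V′. If C is a base of the root system R′, then C can be extended to a base B of R (i.e., there exists a base B of R with C ⊆ B). -/

import Mathlib

/-!
Choose a linear form `g` equal to `1` on `C`, and a linear form `φ` that vanishes on `V'` but
on no root outside `V'`. For `N` large, `f = N φ + g` satisfies `|f r| ≥ 1` on every root:
outside `V'` because `N φ` dominates, and on `R ∩ V'` because there `f = g` takes nonzero
integer values, each such root being an integer combination of `C` with coefficients of one
sign. The base of `R` cut out by `f`, made of the positive roots that are not sums of two
positive roots, then contains `C`: a root with `f`-value `1` is not a sum of two roots with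
`f`-values `≥ 1`.
-/

open scoped RealInnerProductSpace

variable {V : Type*} [NormedAddCommGroup V] [InnerProductSpace ℝ V] [FiniteDimensional ℝ V]

/-- A (reduced, crystallographic) root system in the span of `R`. -/
def IsRootSystemIn (R : Set V) : Prop :=
  R.Finite ∧ (0 : V) ∉ R ∧
  (∀ α ∈ R, ∀ β ∈ R, β - (2 * ⟪β, α⟫ / ⟪α, α⟫) • α ∈ R) ∧
  (∀ α ∈ R, ∀ β ∈ R, ∃ k : ℤ, 2 * ⟪β, α⟫ / ⟪α, α⟫ = (k : ℝ)) ∧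
  (∀ α ∈ R, ∀ t : ℝ, t • α ∈ R → t = 1 ∨ t = -1)

/-- A root system in the ambient space `V`. -/
def IsRootSystem (R : Set V) : Prop :=
  IsRootSystemIn R ∧ Submodule.span ℝ R = ⊤

/-- `B` is a base of the root system `R`: a linearly independent subset spanning the span
of `R` such that every root is a `ℤ`-linear combination of `B` with coefficients
all nonnegative or all nonpositive. -/
def IsBaseOf (R B : Set V) : Prop :=
  B ⊆ R ∧ LinearIndependent ℝ ((↑) : B → V) ∧
  Submodule.span ℝ B = Submodule.span ℝ R ∧
  ∀ r ∈ R, ∃ c : V →₀ ℤ, (c.support : Set V) ⊆ B ∧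
    r = c.sum (fun v n => n • v) ∧ ((∀ v, 0 ≤ c v) ∨ (∀ v, c v ≤ 0))

/-- A π-system in `R`: a linearly independent set of roots whose pairwise
differences are not roots. -/
def IsPiSystemIn (R C : Set V) : Prop :=
  C ⊆ R ∧ LinearIndependent ℝ ((↑) : C → V) ∧
  ∀ α ∈ C, ∀ β ∈ C, α - β ∉ R

/-- `[C]`: the set of roots of `R` that are `ℤ`-linear combinations of elements of `C`. -/
def zClosure (R C : Set V) : Set V :=
  {r ∈ R | r ∈ (Submodule.span ℤ C : Set V)}

lemma exists_finsupp_of_mem_addSubmonoidClosure {M : Type*} [AddCommGroup M] {B : Set M} {x : M}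
    (hx : x ∈ AddSubmonoid.closure B) :
    ∃ c : M →₀ ℤ, (c.support : Set M) ⊆ B ∧ x = c.sum (fun v n => n • v) ∧ ∀ v, 0 ≤ c v := by
  rw [← Submodule.span_nat_eq_addSubmonoidClosure, Submodule.mem_toAddSubmonoid,
    Submodule.mem_span_set] at hx
  obtain ⟨c, hcB, rfl⟩ := hx
  refine ⟨c.mapRange Nat.cast Nat.cast_zero,
    (Finset.coe_subset.2 Finsupp.support_mapRange).trans hcB, ?_, fun v => by simp⟩
  rw [Finsupp.sum_mapRange_index (fun v => zero_smul ℤ v)]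
  simp

section

variable {E : Type*} [NormedAddCommGroup E] [InnerProductSpace ℝ E]

namespace IsRootSystemIn

variable {R : Set E} {α β : E}

lemma ne_zero (hR : IsRootSystemIn R) (hα : α ∈ R) : α ≠ 0 :=
  ne_of_mem_of_not_mem hα hR.2.1

lemma inner_self_pos (hR : IsRootSystemIn R) (hα : α ∈ R) : 0 < ⟪α, α⟫ :=
  real_inner_self_pos.2 (hR.ne_zero hα)

lemma neg_mem (hR : IsRootSystemIn R) (hα : α ∈ R) : -α ∈ R := by
  have h := hR.2.2.1 α hα α hα
  rwa [mul_div_assoc, div_self (hR.inner_self_pos hα).ne', mul_one, two_smul,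
    sub_add_cancel_left] at h

lemma sub_mem_of_inner_pos (hR : IsRootSystemIn R) (hα : α ∈ R) (hβ : β ∈ R) (hne : α ≠ β)
    (hpos : 0 < ⟪α, β⟫) : α - β ∈ R := by
  have hαα := hR.inner_self_pos hα
  have hββ := hR.inner_self_pos hβ
  have hα0 : ‖α‖ ≠ 0 := norm_ne_zero_iff.2 (hR.ne_zero hα)
  have not_parallel : ‖β‖ • α ≠ ‖α‖ • β := by
    intro h
    have hβα : (‖β‖ / ‖α‖) • α = β := by
      rw [div_eq_inv_mul, mul_smul, h, smul_smul, inv_mul_cancel₀ hα0, one_smul]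
    rcases hR.2.2.2.2 α hα _ (hβα ▸ hβ) with h1 | h1
    · exact hne (by rw [← hβα, h1, one_smul])
    · have : 0 ≤ ‖β‖ / ‖α‖ := by positivity
      linarith
  have cauchy_schwarz : ⟪α, β⟫ ^ 2 < ⟪α, α⟫ * ⟪β, β⟫ := by
    rw [real_inner_self_eq_norm_sq, real_inner_self_eq_norm_sq, ← mul_pow]
    exact pow_lt_pow_left₀ (inner_lt_norm_mul_iff_real.2 not_parallel) hpos.le two_ne_zero
  obtain ⟨k, hk⟩ := hR.2.2.2.1 α hα β hβ
  obtain ⟨l, hl⟩ := hR.2.2.2.1 β hβ α hα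
  rw [real_inner_comm] at hk
  have hk0 : 0 < k := Int.cast_pos.1 (hk ▸ div_pos (by linarith) hαα)
  have hl0 : 0 < l := Int.cast_pos.1 (hl ▸ div_pos (by linarith) hββ)
  -- the product of the two Cartan integers is `4 cos² θ < 4`
  have hkl : k * l < 4 := by
    have : (k : ℝ) * l < 4 := by
      rw [← hk, ← hl, div_mul_div_comm, div_lt_iff₀ (by positivity)]
      nlinarith
    exact_mod_cast this
  have : k = 1 ∨ l = 1 := by
    by_contra! h
    nlinarith [show 2 ≤ k by omega, show 2 ≤ l by omega]
  rcases this with rfl | rfl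
  · have h := hR.2.2.1 α hα β hβ
    rw [real_inner_comm, hk, Int.cast_one, one_smul] at h
    simpa using hR.neg_mem h
  · have h := hR.2.2.1 β hβ α hα
    rwa [hl, Int.cast_one, one_smul] at h

end IsRootSystemIn

/-- The simple roots of the positive system `{r ∈ R | 0 < f r}`. -/
def positiveBase (R : Set E) (f : E →ₗ[ℝ] ℝ) : Set E :=
  (↑) '' IsAddIndecomposable.baseOf ((↑) : R → E) (f : E →+ ℝ)

variable {R : Set E} {f : E →ₗ[ℝ] ℝ}

lemma mem_positiveBase {x : E} :
    x ∈ positiveBase R f ↔ x ∈ R ∧ 0 < f x ∧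
      ∀ a ∈ R, ∀ b ∈ R, 0 < f a → 0 < f b → x ≠ a + b := by
  constructor
  · rintro ⟨⟨x, hx⟩, ⟨hpos, hind⟩, rfl⟩
    refine ⟨hx, hpos, fun a ha b hb hfa hfb hab => ?_⟩
    rcases hind ⟨a, ha⟩ hfa ⟨b, hb⟩ hfb hab with h | h <;> simp_all
  · rintro ⟨hx, hpos, hind⟩
    refine ⟨⟨x, hx⟩, ⟨hpos, fun a ha b hb hab => absurd hab (hind a a.2 b b.2 ha hb)⟩, rfl⟩

lemma positiveBase_subset : positiveBase R f ⊆ R := fun _ hx => (mem_positiveBase.1 hx).1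

lemma mem_addSubmonoidClosure_positiveBase (hR : R.Finite) {r : E} (hr : r ∈ R)
    (hpos : 0 < f r) :
    r ∈ AddSubmonoid.closure (positiveBase R f) := by
  have := hR.to_subtype
  rw [positiveBase, AddSubmonoid.closure_image_isAddIndecomposable_baseOf]
  exact AddSubmonoid.subset_closure ⟨⟨r, hr⟩, hpos, rfl⟩

lemma sub_notMem_of_mem_positiveBase (hR : IsRootSystemIn R) (hf : ∀ r ∈ R, f r ≠ 0)
    {α β : E} (hα : α ∈ positiveBase R f) (hβ : β ∈ positiveBase R f) : α - β ∉ R := by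
  intro hαβ
  obtain ⟨hαR, hαpos, hαind⟩ := mem_positiveBase.1 hα
  obtain ⟨hβR, hβpos, hβind⟩ := mem_positiveBase.1 hβ
  rcases (hf _ hαβ).lt_or_gt with hneg | hpos
  · refine hβind _ (hR.neg_mem hαβ) α hαR ?_ hαpos (by abel)
    simpa using hneg
  · exact hαind _ hαβ β hβR hpos hβpos (by abel)

lemma linearIndependent_positiveBase (hR : IsRootSystemIn R) (hf : ∀ r ∈ R, f r ≠ 0) :
    LinearIndependent ℝ ((↑) : positiveBase R f → E) := by
  refine LinearMap.BilinForm.linearIndependent_of_pairwise_le_zero (innerₗ E) (fun x hx => ?_)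
    f _ (fun x => (mem_positiveBase.1 x.2).2.1) fun x y hxy => ?_
  · simpa using real_inner_self_pos.2 hx
  · by_contra! hpos
    exact sub_notMem_of_mem_positiveBase hR hf x.2 y.2 <|
      hR.sub_mem_of_inner_pos (positiveBase_subset x.2) (positiveBase_subset y.2)
        (Subtype.coe_injective.ne hxy) hpos

lemma IsBaseOf.of_mem_or_neg_mem_addSubmonoidClosure {B : Set E} (hBR : B ⊆ R)
    (hB : LinearIndependent ℝ ((↑) : B → E))
    (hclosure : ∀ r ∈ R, r ∈ AddSubmonoid.closure B ∨ -r ∈ AddSubmonoid.closure B) :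
    IsBaseOf R B := by
  have hrepr : ∀ r ∈ R, ∃ c : E →₀ ℤ, (c.support : Set E) ⊆ B ∧
      r = c.sum (fun v n => n • v) ∧ ((∀ v, 0 ≤ c v) ∨ (∀ v, c v ≤ 0)) := by
    intro r hr
    rcases hclosure r hr with h | h
    · obtain ⟨c, hcB, hrc, hc⟩ := exists_finsupp_of_mem_addSubmonoidClosure h
      exact ⟨c, hcB, hrc, Or.inl hc⟩
    · obtain ⟨c, hcB, hrc, hc⟩ := exists_finsupp_of_mem_addSubmonoidClosure h
      refine ⟨-c, by rwa [Finsupp.support_neg], ?_, Or.inr fun v => by simpa using hc v⟩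
      rw [Finsupp.sum_neg_index (fun v => zero_smul ℤ v), ← neg_neg r, hrc]
      simp [Finsupp.sum]
  refine ⟨hBR, hB, le_antisymm (Submodule.span_mono hBR) ?_, hrepr⟩
  rw [Submodule.span_le]
  intro r hr
  obtain ⟨c, hcB, rfl, -⟩ := hrepr r hr
  exact Submodule.sum_mem _ fun v hv => zsmul_mem (Submodule.subset_span (hcB hv)) _

lemma IsRootSystemIn.isBaseOf_positiveBase (hR : IsRootSystemIn R) (hf : ∀ r ∈ R, f r ≠ 0) :
    IsBaseOf R (positiveBase R f) := by
  refine .of_mem_or_neg_mem_addSubmonoidClosure positiveBase_subset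
    (linearIndependent_positiveBase hR hf) fun r hr => ?_
  rcases (hf r hr).lt_or_gt with hneg | hpos
  · exact .inr (mem_addSubmonoidClosure_positiveBase hR.1 (hR.neg_mem hr) (by simpa using hneg))
  · exact .inl (mem_addSubmonoidClosure_positiveBase hR.1 hr hpos)

lemma mem_positiveBase_of_apply_eq_one (hf : ∀ r ∈ R, 1 ≤ |f r|) {v : E} (hv : v ∈ R)
    (hfv : f v = 1) : v ∈ positiveBase R f := by
  refine mem_positiveBase.2 ⟨hv, hfv ▸ one_pos, fun a ha b hb hfa hfb hab => ?_⟩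
  have hfa' := hf a ha
  have hfb' := hf b hb
  rw [abs_of_pos hfa] at hfa'
  rw [abs_of_pos hfb] at hfb'
  have : f a + f b = 1 := by rw [← map_add, ← hab, hfv]
  linarith

lemma IsBaseOf.one_le_abs_apply {C : Set E} (hC : IsBaseOf R C) (h0 : (0 : E) ∉ R)
    {g : E →ₗ[ℝ] ℝ} (hg : ∀ v ∈ C, g v = 1) {r : E} (hr : r ∈ R) : 1 ≤ |g r| := by
  obtain ⟨c, hcC, rfl, hc⟩ := hC.2.2.2 r hr
  have hgc : g (c.sum fun v n => n • v) = ((c.sum fun _ n => n : ℤ) : ℝ) := by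
    rw [Finsupp.sum, map_sum, Finsupp.sum, Int.cast_sum]
    exact Finset.sum_congr rfl fun v hv => by rw [map_zsmul, hg v (hcC hv), zsmul_one]
  have hc0 : c ≠ 0 := by
    rintro rfl
    exact h0 (by simpa using hr)
  obtain ⟨v, hv⟩ := Finsupp.support_nonempty_iff.2 hc0
  have hcv := Finsupp.mem_support_iff.1 hv
  have hsum : (c.sum fun _ n => n) ≠ 0 := by
    rcases hc with hc | hc
    · exact (Finset.sum_pos' (fun w _ => hc w) ⟨v, hv, (hc v).lt_of_ne' hcv⟩).ne'
    · exact (Finset.sum_neg' (fun w _ => hc w) ⟨v, hv, (hc v).lt_of_ne hcv⟩).ne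
  rw [hgc]
  exact_mod_cast Int.one_le_abs hsum

lemma exists_forall_one_le_abs_mul_add {ι : Type*} {S : Set ι} (hS : S.Finite) {a : ι → ℝ}
    (ha : ∀ i ∈ S, a i ≠ 0) (b : ι → ℝ) : ∃ N : ℝ, ∀ i ∈ S, 1 ≤ |N * a i + b i| := by
  refine (hS.eventually_all.2 fun i hi => ?_).exists (f := Filter.atTop)
  filter_upwards [Filter.eventually_ge_atTop ((1 + |b i|) / |a i|)] with N hN
  have hai := abs_pos.2 (ha i hi)
  have hN0 : 0 ≤ N := le_trans (by positivity) hN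
  rw [div_le_iff₀ hai] at hN
  calc 1 ≤ |N * a i| - |b i| := by rw [abs_mul, abs_of_nonneg hN0]; linarith
    _ ≤ |N * a i + b i| := abs_sub_abs_le_abs_add _ _

lemma exists_apply_eq_one_and_one_le_abs {C : Set E} (hR : R.Finite) (h0 : (0 : E) ∉ R)
    (V' : Submodule ℝ E) (hC : IsBaseOf (R ∩ V') C) :
    ∃ f : E →ₗ[ℝ] ℝ, (∀ v ∈ C, f v = 1) ∧ ∀ r ∈ R, 1 ≤ |f r| := by
  obtain ⟨g, hg⟩ := Module.exists_dual_forall_apply_eq_one (v := id) hC.2.1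
  have hS : (R \ V').Finite := hR.sdiff
  have := hS.to_subtype
  obtain ⟨ψ, hψ⟩ := Module.exists_dual_forall_apply_ne_zero (K := ℝ)
    (fun r : ↥(R \ V') => V'.mkQ r) fun r => by simpa using r.2.2
  obtain ⟨N, hN⟩ := exists_forall_one_le_abs_mul_add hS
    (a := fun r => ψ (V'.mkQ r)) (fun r hr => hψ ⟨r, hr⟩) g
  refine ⟨N • (ψ ∘ₗ V'.mkQ) + g, fun v hv => ?_, fun r hr => ?_⟩
  · simpa [(Submodule.Quotient.mk_eq_zero V').2 (hC.1 hv).2] using hg v hv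
  · by_cases hrV : r ∈ V'
    · simpa [(Submodule.Quotient.mk_eq_zero V').2 hrV] using
        hC.one_le_abs_apply (fun h => h0 h.1) hg ⟨hr, hrV⟩
    · simpa using hN r ⟨hr, hrV⟩

end

/-- A base of `R' = R ∩ V'` extends to a base of `R`. -/
theorem base_of_inter_extends (R : Set V) (hR : IsRootSystem R)
    (V' : Submodule ℝ V) (C : Set V)
    (hC : IsBaseOf (R ∩ (V' : Set V)) C) :
    ∃ B : Set V, IsBaseOf R B ∧ C ⊆ B := by
  obtain ⟨f, hfC, hfR⟩ := exists_apply_eq_one_and_one_le_abs hR.1.1 hR.1.2.1 V' hC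
  have hf : ∀ r ∈ R, f r ≠ 0 := fun r hr h => (hfR r hr).not_gt (by simp [h])
  exact ⟨positiveBase R f, hR.1.isBaseOf_positiveBase hf,
    fun v hv => mem_positiveBase_of_apply_eq_one hfR (hC.1 hv).1 (hfC v hv)⟩
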